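/- arXiv:1207.3778 — 2 statements merged into one kernel-verified Lean document; each statement's English description precedes it below -/
import Mathlib

section
/- For every arrow α ∈ Q₁ one has the relation x(α)·x(g(α))·x(f(g(α))) = c(f(α))·x(α)·x(f(α))·x(g(f(α)))·x(g²(f(α)))⋯x(g^{n_{f(α)}−2}(f(α))) in A. -/
/-!
The relation at `α` is the Jacobian relation at `β = f (f (g α))`, multiplied on the left by
`x α`. Since `f³ = id`, the left-hand side of that relation is `x (g α) * x (f (g α))`. Moreover
`g β = f α`: the only two arrows leaving `t β = t α` are `f α` and `g α`, and `g β ≠ f β = g α`.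
Hence the `g`-orbit of `β` is that of `f α`, with the same length `n` and coefficient, and the
path of length `n - 1` starting at `f α` splits off its first factor `x (f α)`; here `n ≥ 2`
because `g` fixes no arrow, the quiver having no loops.
-/

/-- The product `x α * x (g α) * ⋯ * x (g^[m-1] α)` of `m` factors along the `g`-orbit,
read left to right (the empty product for `m = 0` is `1`). -/
def gpath {Q₁ A : Type} [Ring A] (x : Q₁ → A) (g : Q₁ → Q₁) (α : Q₁) (m : ℕ) : A :=
  ((List.range m).map fun i => x (g^[i] α)).prod

open Function

lemma gpath_succ {Q₁ A : Type} [Ring A] (x : Q₁ → A) (g : Q₁ → Q₁) (α : Q₁) (m : ℕ) :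
    gpath x g α (m + 1) = x α * gpath x g (g α) m := by
  simp only [gpath, List.range_succ_eq_map, List.map_cons, List.prod_cons, List.map_map,
    comp_def, iterate_succ_apply, iterate_zero_apply]

lemma Function.Injective.two_le_minimalPeriod {α : Type*} [Finite α] {g : α → α}
    (hg : Injective g) {a : α} (ha : ¬IsFixedPt g a) : 2 ≤ minimalPeriod g a := by
  have hpos : 0 < minimalPeriod g a :=
    minimalPeriod_pos_of_mem_periodicPts (hg.mem_periodicPts a)
  have hne : minimalPeriod g a ≠ 1 := fun h => ha (minimalPeriod_eq_one_iff_isFixedPt.mp h)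
  omega

section Quiver

variable {Q₀ Q₁ : Type*} [Fintype Q₁] [DecidableEq Q₀] {s t : Q₁ → Q₀} {f g : Q₁ → Q₁}

lemma eq_or_eq_of_source_eq_target
    (hout : ∀ v : Q₀, (Finset.univ.filter fun e => s e = v).card = 2)
    (hfg : ∀ α : Q₁, f α ≠ g α) (hsf : ∀ α : Q₁, s (f α) = t α) (hsg : ∀ α : Q₁, s (g α) = t α)
    {α e : Q₁} (he : s e = t α) : e = f α ∨ e = g α := by
  classical
  have hsub : ({f α, g α} : Finset Q₁) ⊆ Finset.univ.filter fun e => s e = t α := by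
    simp [Finset.insert_subset_iff, hsf, hsg]
  have hpair_eq := Finset.eq_of_subset_of_card_le hsub (by rw [hout, Finset.card_pair (hfg α)])
  have hmem : e ∈ Finset.univ.filter fun e => s e = t α := by simpa using he
  simpa [← hpair_eq] using hmem

lemma g_f_f_g_eq_f
    (hout : ∀ v : Q₀, (Finset.univ.filter fun e => s e = v).card = 2)
    (hfg : ∀ α : Q₁, f α ≠ g α) (hsf : ∀ α : Q₁, s (f α) = t α) (hsg : ∀ α : Q₁, s (g α) = t α)
    (hf3 : ∀ α : Q₁, f (f (f α)) = α) (α : Q₁) : g (f (f (g α))) = f α := by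
  have hsource : s (g (f (f (g α)))) = t α := by rw [hsg, ← hsf, hf3, hsg]
  refine (eq_or_eq_of_source_eq_target hout hfg hsf hsg hsource).resolve_right fun h => ?_
  exact hfg (f (f (g α))) (by rw [hf3, h])

end Quiver

theorem stmt_12_general
  {Q₀ Q₁ : Type} [Fintype Q₁] [DecidableEq Q₀]
  (s t : Q₁ → Q₀)
  (hnoloop : ∀ e : Q₁, s e ≠ t e)
  (hout : ∀ v : Q₀, (Finset.univ.filter fun e => s e = v).card = 2)
  (f g : Q₁ ≃ Q₁)
  (hfg : ∀ α : Q₁, f α ≠ g α)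
  (hsf : ∀ α : Q₁, s (f α) = t α)
  (hsg : ∀ α : Q₁, s (g α) = t α)
  (hf3 : ∀ α : Q₁, f (f (f α)) = α)
  {K : Type} [Field K] {A : Type} [Ring A] [Algebra K A]
  (c : Q₁ → K) (hcg : ∀ α : Q₁, c (g α) = c α)
  (x : Q₁ → A)
  (hrel : ∀ α : Q₁, x (f α) * x (f (f α)) =
      c α • gpath x (⇑g) (g α) (Function.minimalPeriod (⇑g) α - 1)) :
    ∀ α : Q₁, x α * x (g α) * x (f (g α)) =
      c (f α) • (x α * x (f α) *
        gpath x (⇑g) (g (f α)) (Function.minimalPeriod (⇑g) (f α) - 2)) := by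
  intro α
  have hgβ : g (f (f (g α))) = f α := g_f_f_g_eq_f hout hfg hsf hsg hf3 α
  have hperiod : minimalPeriod g (f (f (g α))) = minimalPeriod g (f α) := by
    rw [← hgβ, minimalPeriod_apply (g.injective.mem_periodicPts _)]
  have hcoeff : c (f (f (g α))) = c (f α) := by rw [← hgβ, hcg]
  have hrelβ := hrel (f (f (g α)))
  rw [hf3, hgβ, hperiod, hcoeff] at hrelβ
  obtain ⟨n, hn⟩ : ∃ n, minimalPeriod g (f α) = n + 2 :=
    ⟨_, (Nat.sub_add_cancel (g.injective.two_le_minimalPeriod fun h =>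
      hnoloop (f α) (by rw [← hsg, h]))).symm⟩
  rw [hn, show n + 2 - 1 = n + 1 by omega, gpath_succ] at hrelβ
  rw [hn, Nat.add_sub_cancel, mul_assoc, hrelβ, mul_smul_comm, mul_assoc]

theorem stmt_12
  {Q₀ Q₁ : Type} [Fintype Q₀] [Fintype Q₁] [DecidableEq Q₀] [DecidableEq Q₁]
  [Nonempty Q₀] [Nonempty Q₁]
  (s t : Q₁ → Q₀)
  (hconn : ∀ u v : Q₀, Relation.EqvGen (fun a b => ∃ e : Q₁, s e = a ∧ t e = b) u v)
  (hnoloop : ∀ e : Q₁, s e ≠ t e)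
  (hno2cyc : ∀ e e' : Q₁, ¬ (s e = t e' ∧ t e = s e'))
  (hout : ∀ v : Q₀, (Finset.univ.filter fun e => s e = v).card = 2)
  (hin : ∀ v : Q₀, (Finset.univ.filter fun e => t e = v).card = 2)
  (f g : Q₁ ≃ Q₁)
  (hfg : ∀ α : Q₁, f α ≠ g α)
  (hsf : ∀ α : Q₁, s (f α) = t α)
  (hsg : ∀ α : Q₁, s (g α) = t α)
  (hf3 : ∀ α : Q₁, f (f (f α)) = α)
  (bar : Q₁ → Q₁)
  (hbar_ne : ∀ α : Q₁, bar α ≠ α)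
  (hbar_s : ∀ α : Q₁, s (bar α) = s α)
  {K : Type} [Field K] {A : Type} [Ring A] [Algebra K A]
  (c : Q₁ → K) (hc0 : ∀ α : Q₁, c α ≠ 0) (hcg : ∀ α : Q₁, c (g α) = c α)
  (x : Q₁ → A)
  (hrel : ∀ α : Q₁, x (f α) * x (f (f α)) =
      c α • gpath x (⇑g) (g α) (Function.minimalPeriod (⇑g) α - 1)) :
    ∀ α : Q₁, x α * x (g α) * x (f (g α)) =
      c (f α) • (x α * x (f α) *
        gpath x (⇑g) (g (f α)) (Function.minimalPeriod (⇑g) (f α) - 2)) :=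
  stmt_12_general s t hnoloop hout f g hfg hsf hsg hf3 c hcg x hrel
end

section
/- Assume in addition condition (◇): g∘g∘g = id on Q₁, and assume that for every arrow α the product c(α)·c(ᾱ)·c(f(α))·c(f(ᾱ)) ≠ 1 (by Lemma 3.9 these four arrows represent the four g-orbits, so this says the product of the scalars over one representative of each g-orbit is not 1). Then for every arrow α ∈ Q₁: x(α)·x(g(α))·x(f(g(α))) = 0 and x(α)·x(f(α))·x(g(f(α))) = 0 in A. -/
open Function

theorem Finset.eq_of_mem_of_ne_of_card_eq_two {α : Type*} {S : Finset α} (hS : S.card = 2)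
    {a b c : α} (ha : a ∈ S) (hb : b ∈ S) (hc : c ∈ S) (hba : b ≠ a) (hca : c ≠ a) :
    b = c := by
  classical
  have hcard : (S.erase a).card ≤ 1 := by rw [Finset.card_erase_of_mem ha, hS]
  exact Finset.card_le_one.mp hcard b (Finset.mem_erase.mpr ⟨hba, hb⟩) c
    (Finset.mem_erase.mpr ⟨hca, hc⟩)

theorem gpath_two {Q₁ A : Type} [Ring A] (x : Q₁ → A) (g : Q₁ → Q₁) (α : Q₁) :
    gpath x g α 2 = x α * x (g α) := by
  simp [gpath, List.range_succ]

theorem minimalPeriod_eq_three {α : Type*} {g : α → α} {a : α} (h3 : g (g (g a)) = a)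
    (hfix : g a ≠ a) : minimalPeriod g a = 3 :=
  minimalPeriod_eq_prime (p := 3) h3 hfix

section Bar

variable {Q₀ Q₁ : Type} [Fintype Q₁] [DecidableEq Q₀] {s t : Q₁ → Q₀} {bar : Q₁ → Q₁}

theorem eq_bar_of_source_eq (hout : ∀ v : Q₀, (Finset.univ.filter fun e => s e = v).card = 2)
    (hbar_ne : ∀ α : Q₁, bar α ≠ α) (hbar_s : ∀ α : Q₁, s (bar α) = s α) {β γ : Q₁}
    (hs : s γ = s β) (hne : γ ≠ β) : γ = bar β :=
  Finset.eq_of_mem_of_ne_of_card_eq_two (hout (s β)) (by simp) (by simpa using hs)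
    (by simpa using hbar_s β) hne (hbar_ne β)

theorem bar_bar (hout : ∀ v : Q₀, (Finset.univ.filter fun e => s e = v).card = 2)
    (hbar_ne : ∀ α : Q₁, bar α ≠ α) (hbar_s : ∀ α : Q₁, s (bar α) = s α) (β : Q₁) :
    bar (bar β) = β :=
  (eq_bar_of_source_eq hout hbar_ne hbar_s (hbar_s β).symm (hbar_ne β).symm).symm

variable {f g : Q₁ → Q₁}

theorem bar_apply_g (hout : ∀ v : Q₀, (Finset.univ.filter fun e => s e = v).card = 2)
    (hbar_ne : ∀ α : Q₁, bar α ≠ α) (hbar_s : ∀ α : Q₁, s (bar α) = s α)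
    (hfg : ∀ α : Q₁, f α ≠ g α) (hsf : ∀ α : Q₁, s (f α) = t α) (hsg : ∀ α : Q₁, s (g α) = t α)
    (β : Q₁) : bar (g β) = f β :=
  (eq_bar_of_source_eq hout hbar_ne hbar_s (by rw [hsf, hsg]) (hfg β)).symm

theorem bar_apply_f (hout : ∀ v : Q₀, (Finset.univ.filter fun e => s e = v).card = 2)
    (hbar_ne : ∀ α : Q₁, bar α ≠ α) (hbar_s : ∀ α : Q₁, s (bar α) = s α)
    (hfg : ∀ α : Q₁, f α ≠ g α) (hsf : ∀ α : Q₁, s (f α) = t α) (hsg : ∀ α : Q₁, s (g α) = t α)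
    (β : Q₁) : bar (f β) = g β := by
  rw [← bar_apply_g hout hbar_ne hbar_s hfg hsf hsg β, bar_bar hout hbar_ne hbar_s]

end Bar

section Paths

variable {Q₁ K A : Type} [CommSemiring K] [Semiring A] [Algebra K A]
  {f g bar : Q₁ → Q₁} {c : Q₁ → K} {x : Q₁ → A}

theorem path_g_f_eq_smul_path_f_g
    (hrel : ∀ β : Q₁, x β * x (f β) = c (bar β) • (x (bar β) * x (g (bar β))))
    (hbar_g : ∀ β : Q₁, bar (g β) = f β) (α : Q₁) :
    x α * x (g α) * x (f (g α)) = c (f α) • (x α * x (f α) * x (g (f α))) := by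
  rw [mul_assoc, hrel, hbar_g, mul_smul_comm, mul_assoc]

theorem path_f_g_eq_smul_path_f_g_bar
    (hrel : ∀ β : Q₁, x β * x (f β) = c (bar β) • (x (bar β) * x (g (bar β))))
    (hbar_g : ∀ β : Q₁, bar (g β) = f β) (hfgbar : ∀ β : Q₁, f (g (bar β)) = g (f β))
    (α : Q₁) :
    x α * x (f α) * x (g (f α)) =
      (c (bar α) * c (f (bar α))) • (x (bar α) * x (f (bar α)) * x (g (f (bar α)))) := by
  calc x α * x (f α) * x (g (f α))
      = c (bar α) • (x (bar α) * (x (g (bar α)) * x (f (g (bar α))))) := by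
        rw [hrel, hfgbar, smul_mul_assoc, mul_assoc]
    _ = _ := by
        rw [hrel (g (bar α)), hbar_g, mul_smul_comm, smul_smul, mul_assoc]

end Paths

theorem eq_zero_of_eq_smul_self {K M : Type*} [Field K] [AddCommGroup M] [Module K M]
    {a : K} {u : M} (ha : a ≠ 1) (h : u = a • u) : u = 0 := by
  have h1 : (a - 1) • u = 0 := by rw [sub_smul, one_smul, ← h, sub_self]
  exact (smul_eq_zero.mp h1).resolve_left (sub_ne_zero.mpr ha)

theorem stmt_15_general
  {Q₀ Q₁ : Type} [Fintype Q₁] [DecidableEq Q₀]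
  (s t : Q₁ → Q₀)
  (hnoloop : ∀ e : Q₁, s e ≠ t e)
  (hout : ∀ v : Q₀, (Finset.univ.filter fun e => s e = v).card = 2)
  (f g : Q₁ ≃ Q₁)
  (hfg : ∀ α : Q₁, f α ≠ g α)
  (hsf : ∀ α : Q₁, s (f α) = t α)
  (hsg : ∀ α : Q₁, s (g α) = t α)
  (hf3 : ∀ α : Q₁, f (f (f α)) = α)
  (bar : Q₁ → Q₁)
  (hbar_ne : ∀ α : Q₁, bar α ≠ α)
  (hbar_s : ∀ α : Q₁, s (bar α) = s α)
  {K : Type} [Field K] {A : Type} [Ring A] [Algebra K A]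
  (c : Q₁ → K) (hcg : ∀ α : Q₁, c (g α) = c α)
  (x : Q₁ → A)
  (hrel : ∀ α : Q₁, x (f α) * x (f (f α)) =
      c α • gpath x (⇑g) (g α) (Function.minimalPeriod (⇑g) α - 1))
  (hdia : ∀ α : Q₁, g (g (g α)) = α)
  (hc1 : ∀ α : Q₁, c α * c (bar α) * c (f α) * c (f (bar α)) ≠ 1) :
    ∀ α : Q₁, x α * x (g α) * x (f (g α)) = 0 ∧ x α * x (f α) * x (g (f α)) = 0 := by
  have hbar_f := bar_apply_f hout hbar_ne hbar_s hfg hsf hsg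
  have hbar_g := bar_apply_g hout hbar_ne hbar_s hfg hsf hsg
  have hbar_eq : ∀ β, bar β = g (f (f β)) := fun β => by rw [← hbar_f, hf3]
  have hfgbar : ∀ β, f (g (bar β)) = g (f β) := fun β => by
    rw [hbar_eq, ← hbar_g (g (g (f (f β)))), hdia, hbar_f]
  have hrel' : ∀ β, x β * x (f β) = c (bar β) • (x (bar β) * x (g (bar β))) := fun β => by
    have hper := minimalPeriod_eq_three (hdia (f (f β))) fun h => hnoloop _ (by rw [← hsg, h])
    have h := hrel (f (f β))
    rw [hper, gpath_two] at h
    simp only [hf3] at h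
    rw [hbar_eq, hcg]
    exact h
  intro α
  have hu := path_f_g_eq_smul_path_f_g_bar hrel' hbar_g hfgbar
  have hzero : x α * x (f α) * x (g (f α)) = 0 := by
    refine eq_zero_of_eq_smul_self (a := c (bar α) * c (f (bar α)) * (c α * c (f α))) ?_ ?_
    · convert hc1 α using 1; ring
    · have hu_bar := hu (bar α)
      rw [bar_bar hout hbar_ne hbar_s] at hu_bar
      rw [mul_smul, ← hu_bar, ← hu α]
  exact ⟨by rw [path_g_f_eq_smul_path_f_g hrel' hbar_g, hzero, smul_zero], hzero⟩

theorem stmt_15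
  {Q₀ Q₁ : Type} [Fintype Q₀] [Fintype Q₁] [DecidableEq Q₀] [DecidableEq Q₁]
  [Nonempty Q₀] [Nonempty Q₁]
  (s t : Q₁ → Q₀)
  (hconn : ∀ u v : Q₀, Relation.EqvGen (fun a b => ∃ e : Q₁, s e = a ∧ t e = b) u v)
  (hnoloop : ∀ e : Q₁, s e ≠ t e)
  (hno2cyc : ∀ e e' : Q₁, ¬ (s e = t e' ∧ t e = s e'))
  (hout : ∀ v : Q₀, (Finset.univ.filter fun e => s e = v).card = 2)
  (hin : ∀ v : Q₀, (Finset.univ.filter fun e => t e = v).card = 2)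
  (f g : Q₁ ≃ Q₁)
  (hfg : ∀ α : Q₁, f α ≠ g α)
  (hsf : ∀ α : Q₁, s (f α) = t α)
  (hsg : ∀ α : Q₁, s (g α) = t α)
  (hf3 : ∀ α : Q₁, f (f (f α)) = α)
  (bar : Q₁ → Q₁)
  (hbar_ne : ∀ α : Q₁, bar α ≠ α)
  (hbar_s : ∀ α : Q₁, s (bar α) = s α)
  {K : Type} [Field K] {A : Type} [Ring A] [Algebra K A]
  (c : Q₁ → K) (hc0 : ∀ α : Q₁, c α ≠ 0) (hcg : ∀ α : Q₁, c (g α) = c α)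
  (x : Q₁ → A)
  (hrel : ∀ α : Q₁, x (f α) * x (f (f α)) =
      c α • gpath x (⇑g) (g α) (Function.minimalPeriod (⇑g) α - 1))
  (hdia : ∀ α : Q₁, g (g (g α)) = α)
  (hc1 : ∀ α : Q₁, c α * c (bar α) * c (f α) * c (f (bar α)) ≠ 1) :
    ∀ α : Q₁, x α * x (g α) * x (f (g α)) = 0 ∧ x α * x (f α) * x (g (f α)) = 0 :=
  stmt_15_general s t hnoloop hout f g hfg hsf hsg hf3 bar hbar_ne hbar_s c hcg x hrel hdia hc1
end
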